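/- Let X be a compact metric space, f_{0,∞} a sequence of continuous self-maps, A an increasing sequence of nonnegative integers, and k ≥ 1. Then the topological sequence entropy of the k-fold product system (X^k, f_{0,∞}^{(k)}) along A equals k times that of (X, f_{0,∞}): h_A(f_{0,∞}^{(k)}) = k·h_A(f_{0,∞}). -/

import Mathlib

open Filter Set MeasureTheory

/-- `nacomp f i n = f (i+n-1) ∘ ⋯ ∘ f i`, the `n`-fold composition of the
nonautonomous system starting at index `i`. -/
def nacomp {X : Type*} (f : ℕ → X → X) (i : ℕ) : ℕ → X → X
  | 0 => id
  | n + 1 => f (i + n) ∘ nacomp f i n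

/-- `E` is an `(n, ε, A)`-separated subset of `Λ` for the nonautonomous system `f`. -/
def IsSepSet {X : Type*} [PseudoMetricSpace X] (f : ℕ → X → X) (A : ℕ → ℕ) (n : ℕ)
    (ε : ℝ) (Λ : Set X) (E : Finset X) : Prop :=
  ↑E ⊆ Λ ∧ ∀ x ∈ E, ∀ y ∈ E, x ≠ y →
    ∃ j : Fin n, ε < dist (nacomp f 0 (A j) x) (nacomp f 0 (A j) y)

/-- `s_n(ε, A, f, Λ)`: maximal cardinality of an `(n,ε,A)`-separated subset of `Λ`. -/
noncomputable def maxSep {X : Type*} [PseudoMetricSpace X] (f : ℕ → X → X) (A : ℕ → ℕ)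
    (n : ℕ) (ε : ℝ) (Λ : Set X) : ℕ :=
  sSup {m | ∃ E : Finset X, IsSepSet f A n ε Λ E ∧ E.card = m}

/-- Topological sequence entropy of `f` on `Λ` along `A`, via separated sets:
`lim_{ε → 0} limsup_n (1/n) log s_n(ε,A,f,Λ)`, the limit realized as a supremum over `ε > 0`. -/
noncomputable def sepEnt {X : Type*} [PseudoMetricSpace X] (f : ℕ → X → X) (A : ℕ → ℕ)
    (Λ : Set X) : EReal :=
  ⨆ ε : {ε : ℝ // 0 < ε},
    limsup (fun n : ℕ => ((Real.log (maxSep f A n ε Λ) / n : ℝ) : EReal)) atTop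

/-- A finite open cover of the whole space. -/
def IsFinOpenCover {X : Type*} [TopologicalSpace X] (𝒜 : Finset (Set X)) : Prop :=
  (∀ u ∈ 𝒜, IsOpen u) ∧ ⋃₀ ↑𝒜 = (univ : Set X)

/-- A cell `⋂_j (f_0^{a_j})⁻¹ (u j)` of the join `⋁_{j} f_0^{-a_j} 𝒜`. -/
def seqCell {X : Type*} (f : ℕ → X → X) (A : ℕ → ℕ) (n : ℕ) (u : Fin n → Set X) : Set X :=
  ⋂ j : Fin n, nacomp f 0 (A j.1) ⁻¹' (u j)

/-- `N((⋁_{j=1}^n f_0^{-a_j} 𝒜)|_Λ)`: the minimal cardinality of a subfamily of the join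
cover whose union contains `Λ`. -/
noncomputable def coverN {X : Type*} (f : ℕ → X → X) (A : ℕ → ℕ) (n : ℕ) (Λ : Set X)
    (𝒜 : Finset (Set X)) : ℕ :=
  sInf {m | ∃ S : Finset (Fin n → Set X), (∀ u ∈ S, ∀ j, u j ∈ 𝒜) ∧
    (Λ ⊆ ⋃ u ∈ S, seqCell f A n u) ∧ S.card = m}

/-- `h_A(f, Λ, 𝒜)`, the sequence entropy of `f` on `Λ` relative to the open cover `𝒜`. -/
noncomputable def coverEntOf {X : Type*} (f : ℕ → X → X) (A : ℕ → ℕ) (Λ : Set X)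
    (𝒜 : Finset (Set X)) : EReal :=
  limsup (fun n : ℕ => ((Real.log (coverN f A n Λ 𝒜) / n : ℝ) : EReal)) atTop

/-- `h_A(f, Λ)`: topological sequence entropy via open covers. -/
noncomputable def coverEnt {X : Type*} [TopologicalSpace X] (f : ℕ → X → X) (A : ℕ → ℕ)
    (Λ : Set X) : EReal :=
  ⨆ 𝒜 : {𝒜 : Finset (Set X) // IsFinOpenCover 𝒜}, coverEntOf f A Λ 𝒜

/-- The supremum topological sequence entropy `h*(f) = sup_A h_A(f)`. -/
noncomputable def supSeqEnt {X : Type*} [PseudoMetricSpace X] (f : ℕ → X → X) : EReal :=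
  ⨆ A : {A : ℕ → ℕ // StrictMono A}, sepEnt f A univ

/-- The `n`-th compositions system `f_{0,∞}^n`, whose `k`-th map is `f_{kn}^n`. -/
def compSys {X : Type*} (f : ℕ → X → X) (n : ℕ) : ℕ → X → X :=
  fun k => nacomp f (k * n) n

/-- A finite measurable partition of the space. -/
def IsFinMeasPartition {X : Type*} [MeasurableSpace X] (P : Finset (Set X)) : Prop :=
  (∀ s ∈ P, MeasurableSet s) ∧ ((P : Set (Set X)).PairwiseDisjoint id) ∧
    ⋃₀ ↑P = (univ : Set X)

/-- `h_{A,μ}(f, P) = limsup (1/n) H_μ(⋁_{j=1}^n f_0^{-a_j} P)`. -/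
noncomputable def measSeqEntPart {X : Type*} [MeasurableSpace X] (μ : Measure X)
    (f : ℕ → X → X) (A : ℕ → ℕ) (P : Finset (Set X)) : EReal :=
  limsup (fun n : ℕ =>
    (((∑ u : Fin n → {s // s ∈ P},
        Real.negMulLog (μ (seqCell f A n (fun j => (u j : Set X)))).toReal) / n : ℝ) : EReal))
    atTop

/-- The measure-theoretic sequence entropy `h_{A,μ}(f)`. -/
noncomputable def measSeqEnt {X : Type*} [MeasurableSpace X] (μ : Measure X)
    (f : ℕ → X → X) (A : ℕ → ℕ) : EReal :=
  ⨆ P : {P : Finset (Set X) // IsFinMeasPartition P}, measSeqEntPart μ f A P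

/-- Covering dimension at most `d`: every finite open cover has a finite open refinement
of order at most `d + 1`. -/
def HasCovDimLE (X : Type*) [TopologicalSpace X] (d : ℕ) : Prop :=
  ∀ 𝒜 : Finset (Set X), IsFinOpenCover 𝒜 → ∃ ℬ : Finset (Set X), IsFinOpenCover ℬ ∧
    (∀ v ∈ ℬ, ∃ u ∈ 𝒜, v ⊆ u) ∧ ∀ x : X, ({v : Set X | v ∈ ℬ ∧ x ∈ v}).ncard ≤ d + 1

/-- The induced nonautonomous system `f̂` on the space of Borel probability measures,
carrying the Lévy–Prokhorov (Prohorov) metric: `f̂ n μ = (f n)_* μ`. -/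
noncomputable def inducedSys {X : Type*} [MeasurableSpace X] (f : ℕ → X → X)
    (hf : ∀ n, Measurable (f n)) :
    ℕ → LevyProkhorov (ProbabilityMeasure X) → LevyProkhorov (ProbabilityMeasure X) :=
  fun n μ => (LevyProkhorov.toMeasureEquiv (α := ProbabilityMeasure X)).symm
    (((LevyProkhorov.toMeasureEquiv (α := ProbabilityMeasure X)) μ).map (hf n).aemeasurable)

/-- Multi-sensitivity of a nonautonomous system. -/
def MultiSensitive {X : Type*} [PseudoMetricSpace X] (f : ℕ → X → X) : Prop :=
  ∃ δ : ℝ, 0 < δ ∧ ∀ (k : ℕ) (V : Fin k → Set X),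
    (∀ i, IsOpen (V i)) → (∀ i, (V i).Nonempty) →
      ∃ n : ℕ, 1 ≤ n ∧ ∀ i, δ < Metric.diam (nacomp f 0 n '' V i)


/-! A `k`-th power of an `(n, ε, A)`-separated set of `X` is separated in `X^k`, and a `k`-th
power of an `(n, ε/2, A)`-spanning set of `X` spans `X^k` for the max metric, so
`s_n(ε, f)^k ≤ s_n(ε, f^{(k)}) ≤ s_n(ε/2, f)^k`. Taking `(1/n) log`, the `limsup` in `n` and the
supremum over `ε`, the halving of `ε` is absorbed by the supremum. -/

def piSys (ι : Type*) {X : Type*} (f : ℕ → X → X) : ℕ → (ι → X) → ι → X :=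
  fun n x i => f n (x i)

-- Unlike separated sets, spanning sets need not lie inside `Λ`.
def IsSpanSet {X : Type*} [PseudoMetricSpace X] (f : ℕ → X → X) (A : ℕ → ℕ) (n : ℕ)
    (ε : ℝ) (Λ : Set X) (D : Finset X) : Prop :=
  ∀ x ∈ Λ, ∃ y ∈ D, ∀ j : Fin n, dist (nacomp f 0 (A j) x) (nacomp f 0 (A j) y) ≤ ε

noncomputable def sepEntAt {X : Type*} [PseudoMetricSpace X] (f : ℕ → X → X) (A : ℕ → ℕ)
    (Λ : Set X) (ε : ℝ) : EReal :=
  limsup (fun n : ℕ => ((Real.log (maxSep f A n ε Λ) / n : ℝ) : EReal)) atTop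

lemma nacomp_piSys {X : Type*} (ι : Type*) (f : ℕ → X → X) (i m : ℕ) (x : ι → X) :
    nacomp (piSys ι f) i m x = fun l => nacomp f i m (x l) := by
  induction m with
  | zero => rfl
  | succ m ih => simp only [nacomp, Function.comp_apply, ih]; rfl

section SeparatedSets

variable {X : Type*} [PseudoMetricSpace X] {f : ℕ → X → X} {A : ℕ → ℕ} {n : ℕ} {ε : ℝ}
  {Λ : Set X}

lemma IsSepSet.card_le_of_isSpanSet {E D : Finset X} (hE : IsSepSet f A n ε Λ E)
    (hD : IsSpanSet f A n (ε / 2) Λ D) : E.card ≤ D.card := by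
  choose! c hcD hc using hD
  refine Finset.card_le_card_of_injOn c (fun x hx => hcD x (hE.1 hx)) fun x hx y hy hxy => ?_
  by_contra hne
  obtain ⟨j, hj⟩ := hE.2 x hx y hy hne
  have hshadow := add_le_add (hc x (hE.1 hx) j) (hc y (hE.1 hy) j)
  rw [show c x = c y from hxy, add_halves] at hshadow
  exact (dist_triangle_right _ _ _).trans hshadow |>.not_gt hj

lemma exists_isSpanSet [CompactSpace X] (hε : 0 < ε) :
    ∃ D : Finset X, IsSpanSet f A n ε Λ D := by
  set orbit : X → Fin n → X := fun x j => nacomp f 0 (A j) x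
  have hbdd : TotallyBounded (orbit '' Λ) := isCompact_univ.totallyBounded.subset (subset_univ _)
  obtain ⟨t, -, htfin, hcover⟩ :=
    Set.exists_subset_image_finite_and.1 (Metric.finite_approx_of_totallyBounded hbdd ε hε)
  refine ⟨htfin.toFinset, fun x hx => ?_⟩
  obtain ⟨_, ⟨y, hy, rfl⟩, hxy⟩ := mem_iUnion₂.1 (hcover (mem_image_of_mem orbit hx))
  exact ⟨y, htfin.mem_toFinset.2 hy, fun j =>
    (dist_le_pi_dist (orbit x) (orbit y) j).trans (Metric.mem_ball.1 hxy).le⟩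

lemma bddAbove_card_isSepSet [CompactSpace X] (hε : 0 < ε) :
    BddAbove {m | ∃ E : Finset X, IsSepSet f A n ε Λ E ∧ E.card = m} := by
  obtain ⟨D, hD⟩ := exists_isSpanSet (f := f) (A := A) (n := n) (Λ := Λ) (half_pos hε)
  exact ⟨D.card, by rintro m ⟨E, hE, rfl⟩; exact hE.card_le_of_isSpanSet hD⟩

lemma IsSepSet.card_le_maxSep [CompactSpace X] (hε : 0 < ε) {E : Finset X}
    (hE : IsSepSet f A n ε Λ E) : E.card ≤ maxSep f A n ε Λ :=
  le_csSup (bddAbove_card_isSepSet hε) ⟨E, hE, rfl⟩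

lemma nonempty_card_isSepSet :
    {m | ∃ E : Finset X, IsSepSet f A n ε Λ E ∧ E.card = m}.Nonempty :=
  ⟨0, ∅, ⟨by simp, by simp⟩, rfl⟩

lemma maxSep_le_card_of_isSpanSet {D : Finset X} (hD : IsSpanSet f A n (ε / 2) Λ D) :
    maxSep f A n ε Λ ≤ D.card :=
  csSup_le nonempty_card_isSepSet <| by
    rintro m ⟨E, hE, rfl⟩
    exact hE.card_le_of_isSpanSet hD

lemma exists_isSepSet_card_eq_maxSep [CompactSpace X] (hε : 0 < ε) :
    ∃ E : Finset X, IsSepSet f A n ε Λ E ∧ E.card = maxSep f A n ε Λ :=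
  Nat.sSup_mem nonempty_card_isSepSet (bddAbove_card_isSepSet hε)

-- A separated set of maximal cardinality admits no further point, so it spans.
lemma exists_isSpanSet_card_eq_maxSep [CompactSpace X] (hε : 0 < ε) :
    ∃ D : Finset X, IsSpanSet f A n ε Λ D ∧ D.card = maxSep f A n ε Λ := by
  classical
  obtain ⟨D, hD, hcard⟩ := exists_isSepSet_card_eq_maxSep (f := f) (A := A) (n := n) (Λ := Λ) hε
  refine ⟨D, fun x hx => ?_, hcard⟩
  by_contra! hfar
  have hxD : x ∉ D := fun hxD => by
    obtain ⟨j, hj⟩ := hfar x hxD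
    simp only [dist_self] at hj
    linarith
  have hsep : IsSepSet f A n ε Λ (insert x D) := by
    refine ⟨by simpa [insert_subset_iff] using ⟨hx, hD.1⟩, fun a ha b hb hab => ?_⟩
    rcases Finset.mem_insert.1 ha with rfl | haD <;> rcases Finset.mem_insert.1 hb with rfl | hbD
    · exact absurd rfl hab
    · exact hfar b hbD
    · simpa only [dist_comm] using hfar a haD
    · exact hD.2 a haD b hbD hab
  have := hsep.card_le_maxSep hε
  rw [Finset.card_insert_of_notMem hxD, hcard] at this
  omega

end SeparatedSets

section ProductSystem

variable {X : Type*} [PseudoMetricSpace X] {f : ℕ → X → X} {A : ℕ → ℕ} {n : ℕ} {ε : ℝ}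
  {Λ : Set X} {ι : Type*} [Fintype ι] [DecidableEq ι]

lemma IsSepSet.piFinset {E : Finset X} (hE : IsSepSet f A n ε Λ E) :
    IsSepSet (piSys ι f) A n ε (univ.pi fun _ => Λ) (Fintype.piFinset fun _ => E) := by
  refine ⟨fun x hx => mem_univ_pi.2 fun i => hE.1 (Fintype.mem_piFinset.1 hx i),
    fun x hx y hy hxy => ?_⟩
  obtain ⟨i, hi⟩ := Function.ne_iff.1 hxy
  obtain ⟨j, hj⟩ := hE.2 _ (Fintype.mem_piFinset.1 hx i) _ (Fintype.mem_piFinset.1 hy i) hi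
  refine ⟨j, hj.trans_le ?_⟩
  rw [nacomp_piSys, nacomp_piSys]
  exact dist_le_pi_dist (fun l => nacomp f 0 (A j) (x l)) (fun l => nacomp f 0 (A j) (y l)) i

lemma IsSpanSet.piFinset {D : Finset X} (hε : 0 ≤ ε) (hD : IsSpanSet f A n ε Λ D) :
    IsSpanSet (piSys ι f) A n ε (univ.pi fun _ => Λ) (Fintype.piFinset fun _ => D) := by
  choose! c hcD hc using hD
  refine fun x hx => ⟨fun i => c (x i), Fintype.mem_piFinset.2 fun i => hcD _ (hx i trivial),
    fun j => ?_⟩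
  rw [nacomp_piSys, nacomp_piSys, dist_pi_le_iff hε]
  exact fun i => hc _ (hx i trivial) j

variable [CompactSpace X]

lemma maxSep_pow_le_maxSep_piSys (hε : 0 < ε) :
    maxSep f A n ε Λ ^ Fintype.card ι ≤ maxSep (piSys ι f) A n ε (univ.pi fun _ => Λ) := by
  obtain ⟨E, hE, hcard⟩ := exists_isSepSet_card_eq_maxSep (f := f) (A := A) (n := n) (Λ := Λ) hε
  have := (hE.piFinset (ι := ι)).card_le_maxSep hε
  rwa [Fintype.card_piFinset, Finset.prod_const, Finset.card_univ, hcard] at this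

lemma maxSep_piSys_le_pow (hε : 0 < ε) :
    maxSep (piSys ι f) A n ε (univ.pi fun _ => Λ) ≤ maxSep f A n (ε / 2) Λ ^ Fintype.card ι := by
  obtain ⟨D, hD, hcard⟩ :=
    exists_isSpanSet_card_eq_maxSep (f := f) (A := A) (n := n) (Λ := Λ) (half_pos hε)
  have := maxSep_le_card_of_isSpanSet (hD.piFinset (ι := ι) (half_pos hε).le)
  rwa [Fintype.card_piFinset, Finset.prod_const, Finset.card_univ, hcard] at this

end ProductSystem

lemma limsup_log_div_mono {a b : ℕ → ℕ} (h : ∀ n, a n ≤ b n) :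
    limsup (fun n : ℕ => ((Real.log (a n) / n : ℝ) : EReal)) atTop
      ≤ limsup (fun n : ℕ => ((Real.log (b n) / n : ℝ) : EReal)) atTop := by
  refine limsup_le_limsup (Eventually.of_forall fun n => EReal.coe_le_coe_iff.2 ?_)
  refine div_le_div_of_nonneg_right ?_ n.cast_nonneg
  rcases (a n).eq_zero_or_pos with ha | ha
  · simpa [ha] using Real.log_natCast_nonneg (b n)
  · exact Real.log_le_log (by exact_mod_cast ha) (by exact_mod_cast h n)

lemma limsup_log_pow_div (a : ℕ → ℕ) (k : ℕ) :
    limsup (fun n : ℕ => ((Real.log ↑(a n ^ k) / n : ℝ) : EReal)) atTop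
      = k * limsup (fun n : ℕ => ((Real.log (a n) / n : ℝ) : EReal)) atTop := by
  rw [← EReal.limsup_const_mul_of_nonneg_of_ne_top (Nat.cast_nonneg' k) (EReal.natCast_ne_top k)]
  congr 1
  funext n
  rw [Nat.cast_pow, Real.log_pow, mul_div_assoc, EReal.coe_mul, EReal.coe_natCast]

lemma EReal.mul_iSup_of_pos_of_ne_top {ι : Sort*} {c : EReal} (hc₀ : 0 < c) (hc : c ≠ ⊤)
    (u : ι → EReal) : c * ⨆ i, u i = ⨆ i, c * u i := by
  refine Monotone.map_iSup_of_continuousAt (f := (c * ·)) ?_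
    (fun _ _ h => mul_le_mul_of_nonneg_left h hc₀.le) (EReal.mul_bot_of_pos hc₀)
  exact (EReal.continuousAt_mul (.inl hc₀.ne') (.inl hc₀.ne') (.inl hc₀.ne_bot) (.inl hc)).comp
    (continuousAt_const.prodMk continuousAt_id)

section Entropy

variable {X : Type*} [PseudoMetricSpace X] [CompactSpace X] {f : ℕ → X → X} {A : ℕ → ℕ}
  {ε : ℝ} {Λ : Set X} {ι : Type*} [Fintype ι]

lemma card_mul_sepEntAt_le_sepEntAt_piSys (hε : 0 < ε) :
    (Fintype.card ι : EReal) * sepEntAt f A Λ ε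
      ≤ sepEntAt (piSys ι f) A (univ.pi fun _ => Λ) ε := by
  classical
  rw [sepEntAt, sepEntAt, ← limsup_log_pow_div]
  exact limsup_log_div_mono fun n => maxSep_pow_le_maxSep_piSys hε

lemma sepEntAt_piSys_le_card_mul (hε : 0 < ε) :
    sepEntAt (piSys ι f) A (univ.pi fun _ => Λ) ε
      ≤ (Fintype.card ι : EReal) * sepEntAt f A Λ (ε / 2) := by
  classical
  rw [sepEntAt, sepEntAt, ← limsup_log_pow_div]
  exact limsup_log_div_mono fun n => maxSep_piSys_le_pow hε

theorem sepEnt_piSys [Nonempty ι] :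
    sepEnt (piSys ι f) A (univ.pi fun _ => Λ) = Fintype.card ι * sepEnt f A Λ := by
  have hcard : (0 : EReal) < Fintype.card ι := by exact_mod_cast Fintype.card_pos
  refine le_antisymm (iSup_le fun δ => ?_) ?_
  · calc sepEntAt (piSys ι f) A (univ.pi fun _ => Λ) δ
        ≤ Fintype.card ι * sepEntAt f A Λ (δ / 2) := sepEntAt_piSys_le_card_mul δ.2
      _ ≤ Fintype.card ι * sepEnt f A Λ := by
        gcongr
        exact le_iSup (fun r : {r : ℝ // 0 < r} => sepEntAt f A Λ r) ⟨δ / 2, half_pos δ.2⟩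
  · rw [sepEnt, EReal.mul_iSup_of_pos_of_ne_top hcard (EReal.natCast_ne_top _)]
    exact iSup_mono fun δ => card_mul_sepEntAt_le_sepEntAt_piSys δ.2

end Entropy

theorem sepEnt_pow_general {X : Type*} [MetricSpace X] [CompactSpace X]
    (f : ℕ → X → X)
    (A : ℕ → ℕ) (k : ℕ) (hk : 1 ≤ k) :
    sepEnt (fun n (x : Fin k → X) => fun i => f n (x i)) A univ
      = (k : EReal) * sepEnt f A univ := by
  have : Nonempty (Fin k) := ⟨⟨0, hk⟩⟩
  have h := sepEnt_piSys (ι := Fin k) (f := f) (A := A) (Λ := univ)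
  rw [Set.pi_univ, Fintype.card_fin] at h
  exact h

/-- Sequence entropy of the `k`-fold product system is `k` times the sequence entropy. -/
theorem sepEnt_pow {X : Type*} [MetricSpace X] [CompactSpace X]
    (f : ℕ → X → X) (hf : ∀ n, Continuous (f n))
    (A : ℕ → ℕ) (hA : StrictMono A) (k : ℕ) (hk : 1 ≤ k) :
    sepEnt (fun n (x : Fin k → X) => fun i => f n (x i)) A univ
      = (k : EReal) * sepEnt f A univ :=
  sepEnt_pow_general f A k hk
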